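/- Let q and p be Borel probability measures on a finite-dimensional real inner product space E (e.g. EuclideanSpace ℝ (Fin d)), each with finite second moment. Let μ = ∫ s dp(s) be the mean of p and Var(p) = ∫ ‖s − μ‖² dp(s) its variance. If ŝ and s are independent random vectors with laws q and p respectively, then 𝔼[‖ŝ − s‖²] ≤ 2·W₂²(q, p) + 4·Var(p). -/

import Mathlib

/-!
By independence the left side is the cost of the product coupling `q ⊗ p`, and the
bias–variance identity `∫ ‖x - y‖² dp(y) = ‖x - m‖² + Var p` turns it into
`∫ ‖x - m‖² dq + Var p`. For any coupling `π` of `q` and `p`, integrating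
`‖x - m‖² ≤ 2 ‖x - y‖² + 2 ‖y - m‖²` against `π` gives `∫ ‖x - m‖² dq ≤ 2 cost(π) + 2 Var p`.
Hence the left side is at most `2 W₂²(q, p) + 3 Var p`.
-/

open MeasureTheory ProbabilityTheory

/-- The squared 2-Wasserstein distance between two measures: the infimum over all
couplings `π` (measures on `E × E` with first marginal `μ` and second marginal `ν`)
of `∫ ‖x - y‖² dπ(x, y)`. -/
noncomputable def W2sq {E : Type*} [NormedAddCommGroup E] [MeasurableSpace E]
    (μ ν : Measure E) : ℝ :=
  sInf {c : ℝ | ∃ π : Measure (E × E), IsProbabilityMeasure π ∧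
    π.map Prod.fst = μ ∧ π.map Prod.snd = ν ∧ c = ∫ p, ‖p.1 - p.2‖ ^ 2 ∂π}

lemma norm_sub_sq_le_two_mul_add {F : Type*} [SeminormedAddCommGroup F] (a b c : F) :
    ‖a - b‖ ^ 2 ≤ 2 * ‖a - c‖ ^ 2 + 2 * ‖c - b‖ ^ 2 := by
  calc ‖a - b‖ ^ 2 ≤ (‖a - c‖ + ‖c - b‖) ^ 2 := by
        gcongr; exact norm_sub_le_norm_sub_add_norm_sub a c b
    _ ≤ 2 * ‖a - c‖ ^ 2 + 2 * ‖c - b‖ ^ 2 := by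
        linarith [add_sq_le (a := ‖a - c‖) (b := ‖c - b‖)]

lemma le_W2sq {F : Type*} [NormedAddCommGroup F] [MeasurableSpace F] {μ ν : Measure F}
    [IsProbabilityMeasure μ] [IsProbabilityMeasure ν] {a : ℝ}
    (h : ∀ π : Measure (F × F), IsProbabilityMeasure π → π.map Prod.fst = μ →
      π.map Prod.snd = ν → a ≤ ∫ z, ‖z.1 - z.2‖ ^ 2 ∂π) :
    a ≤ W2sq μ ν := by
  refine le_csInf ⟨_, μ.prod ν, inferInstance, by simp, by simp, rfl⟩ ?_
  rintro c ⟨π, hπ, h1, h2, rfl⟩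
  exact h π hπ h1 h2

lemma ProbabilityTheory.IndepFun.integral_comp_eq_integral_prod {Ω α β : Type*}
    [MeasurableSpace Ω] [MeasurableSpace α] [MeasurableSpace β] {P : Measure Ω} [IsFiniteMeasure P]
    {X : Ω → α} {Y : Ω → β} (hX : AEMeasurable X P) (hY : AEMeasurable Y P)
    (hXY : IndepFun X Y P) {g : α × β → ℝ}
    (hg : AEStronglyMeasurable g ((P.map X).prod (P.map Y))) :
    ∫ ω, g (X ω, Y ω) ∂P = ∫ z, g z ∂((P.map X).prod (P.map Y)) := by
  rw [← (indepFun_iff_map_prod_eq_prod_map_map hX hY).1 hXY] at hg ⊢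
  exact (integral_map (hX.prodMk hY) hg).symm

section

variable {E : Type*} [NormedAddCommGroup E] [MeasurableSpace E]

lemma MeasureTheory.MemLp.fst_of_map_fst {F : Type*} [MeasurableSpace F] {π : Measure (E × F)}
    {μ : Measure E} {r : ENNReal} (h : π.map Prod.fst = μ) (hμ : MemLp id r μ) :
    MemLp Prod.fst r π :=
  hμ.comp_measurePreserving ⟨measurable_fst, h⟩

lemma MeasureTheory.MemLp.snd_of_map_snd {F : Type*} [MeasurableSpace F] {π : Measure (F × E)}
    {μ : Measure E} {r : ENNReal} (h : π.map Prod.snd = μ) (hμ : MemLp id r μ) :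
    MemLp Prod.snd r π :=
  hμ.comp_measurePreserving ⟨measurable_snd, h⟩

lemma integrable_norm_sub_sq {μ : Measure E} [IsFiniteMeasure μ] (h : MemLp id 2 μ) (c : E) :
    Integrable (fun x => ‖x - c‖ ^ 2) μ :=
  (h.sub (memLp_const c)).integrable_norm_pow two_ne_zero

lemma integrable_norm_sub_sq_of_coupling {π : Measure (E × E)} {μ ν : Measure E}
    (h1 : π.map Prod.fst = μ) (h2 : π.map Prod.snd = ν) (hμ : MemLp id 2 μ) (hν : MemLp id 2 ν) :
    Integrable (fun z : E × E => ‖z.1 - z.2‖ ^ 2) π :=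
  ((hμ.fst_of_map_fst h1).sub (hν.snd_of_map_snd h2)).integrable_norm_pow two_ne_zero

lemma integral_norm_sub_sq_le_of_coupling {π : Measure (E × E)} [IsFiniteMeasure π]
    {μ ν : Measure E} (h1 : π.map Prod.fst = μ) (h2 : π.map Prod.snd = ν)
    (hμ : MemLp id 2 μ) (hν : MemLp id 2 ν) (c : E) :
    ∫ x, ‖x - c‖ ^ 2 ∂μ ≤ 2 * ∫ z, ‖z.1 - z.2‖ ^ 2 ∂π + 2 * ∫ y, ‖y - c‖ ^ 2 ∂ν := by
  subst h1 h2
  have hfst : Integrable (fun z : E × E => ‖z.1 - c‖ ^ 2) π :=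
    ((hμ.fst_of_map_fst rfl).sub (memLp_const c)).integrable_norm_pow two_ne_zero
  have hsnd : Integrable (fun z : E × E => ‖z.2 - c‖ ^ 2) π :=
    ((hν.snd_of_map_snd rfl).sub (memLp_const c)).integrable_norm_pow two_ne_zero
  have hcost := integrable_norm_sub_sq_of_coupling rfl rfl hμ hν
  rw [integral_map (f := fun x => ‖x - c‖ ^ 2) measurable_fst.aemeasurable
      ((hμ.1.sub aestronglyMeasurable_const).norm.pow 2),
    integral_map (f := fun x => ‖x - c‖ ^ 2) measurable_snd.aemeasurable
      ((hν.1.sub aestronglyMeasurable_const).norm.pow 2),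
    ← integral_const_mul, ← integral_const_mul,
    ← integral_add (hcost.const_mul 2) (hsnd.const_mul 2)]
  exact integral_mono hfst ((hcost.const_mul 2).add (hsnd.const_mul 2))
    fun z => norm_sub_sq_le_two_mul_add _ _ z.2

end

section

variable {E : Type*} [NormedAddCommGroup E] [InnerProductSpace ℝ E] [CompleteSpace E]
  [MeasurableSpace E]

lemma integral_norm_sub_sq_eq {μ : Measure E} [IsProbabilityMeasure μ] (h : MemLp id 2 μ)
    (c : E) :
    ∫ y, ‖c - y‖ ^ 2 ∂μ = ‖c - ∫ y, y ∂μ‖ ^ 2 + ∫ y, ‖y - ∫ z, z ∂μ‖ ^ 2 ∂μ := by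
  set m := ∫ y, y ∂μ
  have hid : Integrable (fun y : E => y) μ := h.integrable one_le_two
  have hcentered : Integrable (fun y => y - m) μ := hid.sub (integrable_const m)
  have hmean : ∫ y, (y - m) ∂μ = 0 := by
    rw [integral_sub hid (integrable_const m)]
    simp [m]
  have hinner : Integrable (fun y => 2 * inner ℝ (c - m) (y - m)) μ :=
    (hcentered.const_inner _).const_mul 2
  have hlin : Integrable (fun y => ‖c - m‖ ^ 2 - 2 * inner ℝ (c - m) (y - m)) μ :=
    (integrable_const _).sub hinner
  calc ∫ y, ‖c - y‖ ^ 2 ∂μ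
      = ∫ y, (‖c - m‖ ^ 2 - 2 * inner ℝ (c - m) (y - m) + ‖y - m‖ ^ 2) ∂μ := by
        congr 1 with y
        rw [← norm_sub_sq_real, sub_sub_sub_cancel_right]
    _ = ‖c - m‖ ^ 2 + ∫ y, ‖y - m‖ ^ 2 ∂μ := by
        rw [integral_add hlin (integrable_norm_sub_sq h m),
          integral_sub (integrable_const _) hinner,
          integral_const_mul, integral_inner hcentered, hmean]
        simp

lemma integral_prod_norm_sub_sq {μ ν : Measure E} [IsProbabilityMeasure μ]
    [IsProbabilityMeasure ν] (hμ : MemLp id 2 μ) (hν : MemLp id 2 ν) :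
    ∫ z, ‖z.1 - z.2‖ ^ 2 ∂(μ.prod ν) =
      ∫ x, ‖x - ∫ y, y ∂ν‖ ^ 2 ∂μ + ∫ y, ‖y - ∫ y', y' ∂ν‖ ^ 2 ∂ν := by
  rw [integral_prod _ (integrable_norm_sub_sq_of_coupling (by simp) (by simp) hμ hν)]
  simp_rw [integral_norm_sub_sq_eq hν]
  rw [integral_add (integrable_norm_sub_sq hμ _) (integrable_const _)]
  simp

end

/-- **Single-sample expectation error bound.** If `q` and `p` are Borel probability
measures with finite second moment on a finite-dimensional real inner product space,
and `ŝ`, `s` are independent random vectors with laws `q` and `p` respectively, then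
`𝔼[‖ŝ - s‖²] ≤ 2 W₂²(q, p) + 4 Var(p)`. -/
theorem single_sample_error_bound
    {E : Type*} [NormedAddCommGroup E] [InnerProductSpace ℝ E]
    [FiniteDimensional ℝ E] [MeasurableSpace E] [BorelSpace E]
    (q p : Measure E) [IsProbabilityMeasure q] [IsProbabilityMeasure p]
    (hq2 : Integrable (fun x => ‖x‖ ^ 2) q) (hp2 : Integrable (fun x => ‖x‖ ^ 2) p)
    {Ω : Type*} [MeasurableSpace Ω] (P : Measure Ω) [IsProbabilityMeasure P]
    (shat s : Ω → E) (hshat : AEMeasurable shat P) (hs : AEMeasurable s P)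
    (hlawq : P.map shat = q) (hlawp : P.map s = p)
    (hindep : IndepFun shat s P) :
    ∫ ω, ‖shat ω - s ω‖ ^ 2 ∂P ≤
      2 * W2sq q p + 4 * ∫ x, ‖x - ∫ y, y ∂p‖ ^ 2 ∂p := by
  have hq : MemLp id 2 q := (memLp_two_iff_integrable_sq_norm aestronglyMeasurable_id).2 hq2
  have hp : MemLp id 2 p := (memLp_two_iff_integrable_sq_norm aestronglyMeasurable_id).2 hp2
  set m := ∫ y, y ∂p
  have hexpect : ∫ ω, ‖shat ω - s ω‖ ^ 2 ∂P =
      ∫ x, ‖x - m‖ ^ 2 ∂q + ∫ y, ‖y - m‖ ^ 2 ∂p := by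
    rw [← integral_prod_norm_sub_sq hq hp]
    subst hlawq hlawp
    exact hindep.integral_comp_eq_integral_prod hshat hs
      (integrable_norm_sub_sq_of_coupling (by simp) (by simp) hq hp).1
  have hW : (∫ x, ‖x - m‖ ^ 2 ∂q - 2 * ∫ y, ‖y - m‖ ^ 2 ∂p) / 2 ≤ W2sq q p :=
    le_W2sq fun π _ h1 h2 => by
      linarith [integral_norm_sub_sq_le_of_coupling h1 h2 hq hp m]
  have hvar : 0 ≤ ∫ y, ‖y - m‖ ^ 2 ∂p := integral_nonneg fun y => by positivity
  linarith
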